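/- Let b ≥ 2 be an integer, N ∈ ℕ, and x, x' ∈ [0,1] with v(x, x') ≥ N + 1. Then the set T = { z ∈ [0,1] : v(φ_b(x ⊕ z), φ_b(x' ⊕ z)) < N } is countable. -/

import Mathlib

open MeasureTheory Finset

noncomputable section

/-- The `i`-th `b`-adic digit `ξ_{i+1}` of `x ∈ [0,1]` (`0`-indexed), with respect to the
unique `b`-adic expansion of `x` in which infinitely many digits differ from `b-1`
whenever `x ≠ 1`, and all digits equal `b-1` when `x = 1`. -/
def bdigit (b : ℕ) (x : ℝ) (i : ℕ) : ℕ :=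
  if x = 1 then b - 1 else (⌊x * (b : ℝ) ^ (i + 1)⌋).toNat % b

/-- Digitwise addition modulo `b` on `[0,1]`. -/
def badd (b : ℕ) (x y : ℝ) : ℝ :=
  ∑' i : ℕ, (((bdigit b x i + bdigit b y i) % b : ℕ) : ℝ) / (b : ℝ) ^ (i + 1)

/-- The `b`-adic tent transformation `φ_b`: the digits of `φ_b(x)` are
`η_i = ξ_{i+1} - ξ_1 (mod b)` where `(ξ_i)` are the digits of `x`. -/
def btent (b : ℕ) (x : ℝ) : ℝ :=
  ∑' i : ℕ, (((bdigit b x (i + 1) + (b - bdigit b x 0)) % b : ℕ) : ℝ) / (b : ℝ) ^ (i + 1)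

/-- The `k`-th `b`-adic Walsh function `wal_k(x) = ω_b^(κ_0 ξ_1 + κ_1 ξ_2 + ⋯)`. -/
def bwal (b k : ℕ) (x : ℝ) : ℂ :=
  Complex.exp (2 * Real.pi * Complex.I / b) ^
    (∑ i ∈ Finset.range k, (k / b ^ i % b) * bdigit b x i)

/-!
Off a countable set of shifts `z`, the digitwise sequences of `x ⊕ z` and of `φ_b(x ⊕ z)` do not
end in an infinite run of `b - 1`, so they are the genuine `b`-adic expansions of these numbers.
The `i`-th digit of `φ_b(x ⊕ z)` is then `(ξ_{i+2} + ζ_{i+2}) - (ξ_1 + ζ_1) mod b`, which for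
`i < N` only involves the first `N + 1` digits of `x`. The exceptional set is countable because,
once such a run has begun, every further digit of `z` is determined by `x` and finitely many
earlier digits of `z`, and a point of `[0, 1)` is determined by its digits.
-/

open Filter

def baddDigit (b : ℕ) (x z : ℝ) (i : ℕ) : ℕ :=
  (bdigit b x i + bdigit b z i) % b

def btentDigit (b : ℕ) (d : ℕ → ℕ) (i : ℕ) : ℕ :=
  (d (i + 1) + (b - d 0)) % b

section
variable {b : ℕ}

lemma bdigit_lt [NeZero b] (x : ℝ) (i : ℕ) : bdigit b x i < b := by
  unfold bdigit
  split_ifs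
  · exact Nat.sub_one_lt (NeZero.ne b)
  · exact Nat.mod_lt _ (NeZero.pos b)

lemma bdigit_of_mem_Ico {x : ℝ} (hx : x ∈ Set.Ico 0 1) (i : ℕ) :
    bdigit b x i = ⌊x * (b : ℝ) ^ (i + 1)⌋₊ % b := by
  rw [bdigit, if_neg hx.2.ne, Int.floor_toNat]

lemma bdigit_eq_digits [NeZero b] {x : ℝ} (hx : x ∈ Set.Ico 0 1) (i : ℕ) :
    bdigit b x i = Real.digits x b i := by
  rw [bdigit_of_mem_Ico hx, Real.digits, Fin.val_ofNat]

lemma injOn_bdigit [NeZero b] (hb : 1 < b) : Set.InjOn (bdigit b) (Set.Ico 0 1) := by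
  intro x hx y hy hxy
  rw [← Real.ofDigits_digits hb hx, ← Real.ofDigits_digits hb hy]
  congr 1
  funext i
  ext
  rw [← bdigit_eq_digits hx, ← bdigit_eq_digits hy, hxy]

lemma ofDigits_lt_one (hb : 1 < b) {d : ℕ → Fin b} {i : ℕ} (hi : (d i : ℕ) ≠ b - 1) :
    Real.ofDigits d < 1 := by
  rw [← Real.ofDigits_const_last_eq_one' hb]
  have hle : ∀ j, (d j : ℕ) ≤ b - 1 := fun j => Nat.le_sub_one_of_lt (d j).isLt
  refine Summable.tsum_lt_tsum (i := i) (fun j => ?_) ?_ Real.summable_ofDigitsTerm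
    Real.summable_ofDigitsTerm
  · unfold Real.ofDigitsTerm
    gcongr
    exact_mod_cast hle j
  · unfold Real.ofDigitsTerm
    gcongr
    exact_mod_cast (hle i).lt_of_ne hi

lemma ofDigits_eq_div (d : ℕ → Fin b) :
    Real.ofDigits d = ((d 0 : ℝ) + Real.ofDigits (fun i => d (i + 1))) / b := by
  rw [Real.ofDigits_eq_sum_add_ofDigits d 1]
  simp only [range_one, Real.ofDigitsTerm, sum_singleton, zero_add, pow_one]
  ring

lemma Filter.Frequently.nat_succ {p : ℕ → Prop} (h : ∃ᶠ i in atTop, p i) :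
    ∃ᶠ i in atTop, p (i + 1) := by
  rwa [← map_add_atTop_eq_nat 1, frequently_map] at h

lemma ofDigits_mem_Ico (hb : 1 < b) {d : ℕ → Fin b} (hd : ∃ᶠ i in atTop, (d i : ℕ) ≠ b - 1) :
    Real.ofDigits d ∈ Set.Ico 0 1 :=
  ⟨Real.ofDigits_nonneg d, ofDigits_lt_one hb hd.exists.choose_spec⟩

lemma floor_ofDigits_mul_pow_succ [NeZero b] (d : ℕ → Fin b) (i : ℕ) :
    ⌊Real.ofDigits d * (b : ℝ) ^ (i + 1)⌋₊
      = d 0 * b ^ i + ⌊Real.ofDigits (fun i => d (i + 1)) * (b : ℝ) ^ i⌋₊ := by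
  rw [ofDigits_eq_div, div_mul_eq_mul_div, pow_succ, ← mul_assoc,
    mul_div_cancel_right₀ _ (NeZero.ne (b : ℝ)), add_mul, add_comm, ← Nat.cast_pow, ← Nat.cast_mul,
    Nat.floor_add_natCast (mul_nonneg (Real.ofDigits_nonneg _) (by positivity)), add_comm,
    Nat.cast_pow]

lemma bdigit_ofDigits [NeZero b] (hb : 1 < b) {d : ℕ → Fin b}
    (hd : ∃ᶠ i in atTop, (d i : ℕ) ≠ b - 1) (i : ℕ) : bdigit b (Real.ofDigits d) i = d i := by
  induction i generalizing d with
  | zero =>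
    rw [bdigit_of_mem_Ico (ofDigits_mem_Ico hb hd), floor_ofDigits_mul_pow_succ]
    simp only [pow_zero, mul_one]
    rw [Nat.floor_eq_zero.2 (ofDigits_mem_Ico hb hd.nat_succ).2, add_zero,
      Nat.mod_eq_of_lt (d 0).isLt]
  | succ i ih =>
    rw [bdigit_of_mem_Ico (ofDigits_mem_Ico hb hd), floor_ofDigits_mul_pow_succ, pow_succ,
      ← mul_assoc, mul_comm _ b, Nat.mul_add_mod,
      ← bdigit_of_mem_Ico (ofDigits_mem_Ico hb hd.nat_succ), ih hd.nat_succ]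

lemma tsum_mod_div_pow_eq_ofDigits [NeZero b] (f : ℕ → ℕ) :
    ∑' i, ((f i % b : ℕ) : ℝ) / (b : ℝ) ^ (i + 1)
      = Real.ofDigits (fun i => Fin.ofNat b (f i)) := by
  simp only [Real.ofDigits, Real.ofDigitsTerm, Fin.val_ofNat, div_eq_mul_inv]

lemma bdigit_tsum_mod_div_pow [NeZero b] (hb : 1 < b) {f : ℕ → ℕ}
    (hf : ∃ᶠ i in atTop, f i % b ≠ b - 1) (i : ℕ) :
    bdigit b (∑' i, ((f i % b : ℕ) : ℝ) / (b : ℝ) ^ (i + 1)) i = f i % b := by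
  rw [tsum_mod_div_pow_eq_ofDigits, bdigit_ofDigits hb (by simpa only [Fin.val_ofNat] using hf),
    Fin.val_ofNat]

lemma bdigit_badd [NeZero b] (hb : 1 < b) {x z : ℝ}
    (h : ∃ᶠ i in atTop, baddDigit b x z i ≠ b - 1) (i : ℕ) :
    bdigit b (badd b x z) i = baddDigit b x z i :=
  bdigit_tsum_mod_div_pow hb h i

lemma bdigit_btent [NeZero b] (hb : 1 < b) {y : ℝ}
    (h : ∃ᶠ i in atTop, btentDigit b (bdigit b y) i ≠ b - 1) (i : ℕ) :
    bdigit b (btent b y) i = btentDigit b (bdigit b y) i :=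
  bdigit_tsum_mod_div_pow hb h i

lemma bdigit_btent_badd [NeZero b] (hb : 1 < b) {x z : ℝ}
    (hadd : ∃ᶠ i in atTop, baddDigit b x z i ≠ b - 1)
    (htent : ∃ᶠ i in atTop, btentDigit b (baddDigit b x z) i ≠ b - 1) (i : ℕ) :
    bdigit b (btent b (badd b x z)) i = btentDigit b (baddDigit b x z) i := by
  have hdig : bdigit b (badd b x z) = baddDigit b x z := funext (bdigit_badd hb hadd)
  rw [bdigit_btent hb (hdig ▸ htent), hdig]

lemma countable_of_prefix_determines_digits [NeZero b] (hb : 1 < b) {S : Set ℝ}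
    (hS : S ⊆ Set.Icc 0 1) (M : ℕ)
    (h : ∀ z ∈ S, ∀ w ∈ S, (∀ j < M, bdigit b z j = bdigit b w j) →
      ∀ j, bdigit b z j = bdigit b w j) :
    S.Countable := by
  have hS' : S ⊆ (S ∩ Set.Ico 0 1) ∪ {1} := fun z hz =>
    (eq_or_ne z 1).elim Or.inr fun hz1 => Or.inl ⟨hz, (hS hz).1, (hS hz).2.lt_of_ne hz1⟩
  refine (Set.Countable.union ?_ (Set.countable_singleton 1)).mono hS'
  refine (Set.mapsTo_univ (fun z (j : Fin M) => bdigit b z j) _).countable_of_injOn ?_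
    Set.countable_univ
  intro z hz w hw hzw
  exact injOn_bdigit hb hz.2 hw.2 (funext (h z hz.1 w hw.1 fun j hj => congrFun hzw ⟨j, hj⟩))

lemma countable_setOf_eventually_of_digit_determined [NeZero b] (hb : 1 < b) (P : ℝ → ℕ → Prop)
    (K : ℕ) (hP : ∀ z w i, (∀ j < K, bdigit b z j = bdigit b w j) → P z i → P w i →
      bdigit b z (i + K) = bdigit b w (i + K)) :
    {z ∈ Set.Icc 0 1 | ∀ᶠ i in atTop, P z i}.Countable := by
  have hunion : {z ∈ Set.Icc 0 1 | ∀ᶠ i in atTop, P z i}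
      = ⋃ M, {z ∈ Set.Icc 0 1 | ∀ i ≥ M, P z i} := by
    ext z
    simp only [eventually_atTop, Set.mem_ofPred_eq, Set.mem_iUnion, exists_and_left]
  rw [hunion]
  refine Set.countable_iUnion fun M =>
    countable_of_prefix_determines_digits hb (fun z hz => hz.1) (M + K) ?_
  rintro z ⟨-, hz⟩ w ⟨-, hw⟩ hzw j
  by_cases hj : j < M + K
  · exact hzw j hj
  · obtain ⟨i, rfl⟩ : ∃ i, j = i + K := ⟨j - K, by omega⟩
    exact hP z w i (fun j hj => hzw j (by omega)) (hz i (by omega)) (hw i (by omega))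

lemma countable_setOf_eventually_baddDigit_eq [NeZero b] (hb : 1 < b) (x : ℝ) :
    {z ∈ Set.Icc 0 1 | ∀ᶠ i in atTop, baddDigit b x z i = b - 1}.Countable :=
  countable_setOf_eventually_of_digit_determined hb _ 0 fun z w i _ hz hw =>
    (Nat.ModEq.add_left_cancel' _ (hz.trans hw.symm)).eq_of_lt_of_lt (bdigit_lt z i)
      (bdigit_lt w i)

lemma countable_setOf_eventually_btentDigit_eq [NeZero b] (hb : 1 < b) (x : ℝ) :
    {z ∈ Set.Icc 0 1 | ∀ᶠ i in atTop, btentDigit b (baddDigit b x z) i = b - 1}.Countable := by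
  refine countable_setOf_eventually_of_digit_determined hb _ 1 fun z w i h0 hz hw => ?_
  have h := hz.trans hw.symm
  simp only [btentDigit, baddDigit, h0 0 one_pos] at h
  have hsum := (Nat.ModEq.add_right_cancel' _ h).eq_of_lt_of_lt (Nat.mod_lt _ (NeZero.pos b))
    (Nat.mod_lt _ (NeZero.pos b))
  exact (Nat.ModEq.add_left_cancel' _ hsum).eq_of_lt_of_lt (bdigit_lt z _) (bdigit_lt w _)

end

theorem tent_shift_countable_general (b : ℕ) (hb : 2 ≤ b) (N : ℕ) (x x' : ℝ)
    (hv : ∀ i < N + 1, bdigit b x i = bdigit b x' i) :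
    Set.Countable {z : ℝ | z ∈ Set.Icc (0 : ℝ) 1 ∧ ∃ i < N,
        bdigit b (btent b (badd b x z)) i ≠ bdigit b (btent b (badd b x' z)) i} := by
  have : NeZero b := ⟨by omega⟩
  refine (((countable_setOf_eventually_baddDigit_eq hb x).union
    (countable_setOf_eventually_baddDigit_eq hb x')).union
    ((countable_setOf_eventually_btentDigit_eq hb x).union
    (countable_setOf_eventually_btentDigit_eq hb x'))).mono ?_
  rintro z ⟨hz, i, hi, hne⟩
  by_contra hE
  simp only [Set.mem_union, Set.mem_ofPred_eq, hz, true_and, not_or, not_eventually] at hE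
  obtain ⟨⟨hadd, hadd'⟩, htent, htent'⟩ := hE
  apply hne
  rw [bdigit_btent_badd hb hadd htent, bdigit_btent_badd hb hadd' htent']
  simp only [btentDigit, baddDigit, hv 0 (by omega), hv (i + 1) (by omega)]

/-- **Lemma (countability of the exceptional shift set, one dimension).**
Let `b ≥ 2`, `N ∈ ℕ` and `x, x' ∈ [0,1]` with `v(x,x') ≥ N + 1` (the first `N+1` `b`-adic
digits agree). Then `T = {z ∈ [0,1] : v(φ_b(x ⊕ z), φ_b(x' ⊕ z)) < N}` is countable. -/
theorem tent_shift_countable (b : ℕ) (hb : 2 ≤ b) (N : ℕ) (x x' : ℝ)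
    (hx : x ∈ Set.Icc (0 : ℝ) 1) (hx' : x' ∈ Set.Icc (0 : ℝ) 1)
    (hv : ∀ i < N + 1, bdigit b x i = bdigit b x' i) :
    Set.Countable {z : ℝ | z ∈ Set.Icc (0 : ℝ) 1 ∧ ∃ i < N,
        bdigit b (btent b (badd b x z)) i ≠ bdigit b (btent b (badd b x' z)) i} :=
  tent_shift_countable_general b hb N x x' hv
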